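/- arXiv:2107.08992 — 2 statements merged into one kernel-verified Lean document; each statement's English description precedes it below -/
import Mathlib

section
/- Let M be a torsion-free module over an integral domain R and let M_Q = M ⊗_R Frac(R) be its localization at R \ {0}. The natural map M → M_Q induces a bijection between the projective space ℙ(M) and ℙ(M_Q), where ℙ denotes the quotient of the nonzero elements by the equivalence relation generated by the common-divisor relation. -/
/-- The common-divisor relation on nonzero elements of a module. -/
def relCD (R : Type*) {M : Type*} [CommSemiring R] [AddCommMonoid M] [Module R M]
    (x y : {m : M // m ≠ 0}) : Prop :=
  ∃ (m : M) (r s : R), (x : M) = r • m ∧ (y : M) = s • m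

/-- The projective space of a module: nonzero elements modulo the equivalence
relation generated by the common-divisor relation. -/
def ProjSp (R : Type*) (M : Type*) [CommSemiring R] [AddCommMonoid M] [Module R M] :=
  Quot (relCD R (M := M))

/-!
Over the fraction field `K` the generated equivalence is just proportionality by a unit of `K`.
Torsion-freeness makes `M → M_Q` injective, and the induced map on projective spaces is injective
because a proportionality `y = (a / b) x` in `M_Q` clears to `b • y = a • x` in `M`, a common
multiple to which `x` and `y` are both linked by the common-divisor relation. It is surjective
because every `v ∈ M_Q` has a multiple `s • v` (`s ≠ 0`) coming from `M`, sharing the divisor `v`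
with `v`.
-/

open Function

namespace ProjSp

section Map

variable {R M : Type*} [CommSemiring R] [AddCommMonoid M] [Module R M]

theorem mk_eq_mk_of_smul_eq {x y : {m : M // m ≠ 0}} {r s : R}
    (h : r • (x : M) = s • (y : M)) (hne : r • (x : M) ≠ 0) :
    (Quot.mk _ x : ProjSp R M) = Quot.mk _ y := by
  let z : {m : M // m ≠ 0} := ⟨r • (x : M), hne⟩
  have hxz : relCD R x z := ⟨x, 1, r, (one_smul R _).symm, rfl⟩
  have hzy : relCD R z y := ⟨y, s, 1, h, (one_smul R _).symm⟩
  exact (Quot.sound hxz).trans (Quot.sound hzy)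

variable {A N : Type*} [CommSemiring A] [Algebra R A] [AddCommMonoid N] [Module A N]
  [Module R N] [IsScalarTower R A N]

def map (f : M →ₗ[R] N) (hf : Injective f) : ProjSp R M → ProjSp A N :=
  Quot.lift (fun x ↦ Quot.mk _ ⟨f x, (map_ne_zero_iff f hf).2 x.2⟩) <| by
    rintro x y ⟨n, r, s, hx, hy⟩
    exact Quot.sound ⟨f n, algebraMap R A r, algebraMap R A s,
      show f x = _ by rw [hx, map_smul, algebraMap_smul],
      show f y = _ by rw [hy, map_smul, algebraMap_smul]⟩

end Map

theorem exists_unit_smul_eq_of_mk_eq {K V : Type*} [Field K] [AddCommMonoid V] [Module K V]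
    {x y : {v : V // v ≠ 0}} (h : (Quot.mk _ x : ProjSp K V) = Quot.mk _ y) :
    ∃ q : Kˣ, (y : V) = q • (x : V) := by
  have hxy := Quot.eqvGen_exact h
  clear h
  induction hxy with
  | rel x y hxy =>
    obtain ⟨n, r, s, hx, hy⟩ := hxy
    have hr : r ≠ 0 := by rintro rfl; exact x.2 (by rw [hx, zero_smul])
    have hs : s ≠ 0 := by rintro rfl; exact y.2 (by rw [hy, zero_smul])
    exact ⟨Units.mk0 (s / r) (div_ne_zero hs hr),
      by rw [hx, hy, Units.smul_def, Units.val_mk0, smul_smul, div_mul_cancel₀ _ hr]⟩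
  | refl x => exact ⟨1, (one_smul _ _).symm⟩
  | symm x y _ ih =>
    obtain ⟨q, hq⟩ := ih
    exact ⟨q⁻¹, by rw [hq, inv_smul_smul]⟩
  | trans x y z _ _ ih₁ ih₂ =>
    obtain ⟨q₁, hq₁⟩ := ih₁
    obtain ⟨q₂, hq₂⟩ := ih₂
    exact ⟨q₂ * q₁, by rw [hq₂, hq₁, mul_smul]⟩

theorem smul_ne_zero_of_mem_nonZeroDivisors (K : Type*) {R N : Type*} [CommRing R]
    [Nontrivial R] [Field K] [Algebra R K] [IsFractionRing R K] [AddCommMonoid N] [Module K N]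
    [Module R N] [IsScalarTower R K N] {r : R} (hr : r ∈ nonZeroDivisors R) {v : N} (hv : v ≠ 0) :
    r • v ≠ 0 := by
  rw [← algebraMap_smul K]
  exact smul_ne_zero (IsFractionRing.to_map_ne_zero_of_mem_nonZeroDivisors hr) hv

section FractionField

variable {R M K N : Type*} [CommRing R] [Nontrivial R] [Field K] [Algebra R K]
  [IsFractionRing R K] [AddCommMonoid M] [Module R M] [AddCommMonoid N] [Module K N] [Module R N]
  [IsScalarTower R K N]

variable (f : M →ₗ[R] N) (hf : Injective f)

theorem map_injective : Injective (map (A := K) f hf) := by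
  rintro ⟨x⟩ ⟨y⟩ h
  obtain ⟨q, hq : f y = q • f x⟩ := exists_unit_smul_eq_of_mk_eq h
  -- clear the denominator of `q = a / b` to get `b • y = a • x` over `R`
  obtain ⟨⟨a, b⟩, hab⟩ := IsLocalization.surj (nonZeroDivisors R) (q : K)
  have hba : f ((b : R) • (y : M)) = f (a • (x : M)) := by
    rw [map_smul, map_smul, ← algebraMap_smul K, hq, Units.smul_def, smul_smul, mul_comm, hab,
      algebraMap_smul]
  have hne : (b : R) • (y : M) ≠ 0 := fun h0 ↦
    smul_ne_zero_of_mem_nonZeroDivisors K b.2 ((map_ne_zero_iff f hf).2 y.2)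
      (by rw [← map_smul, h0, map_zero])
  exact (mk_eq_mk_of_smul_eq (hf hba) hne).symm

theorem map_surjective [IsLocalizedModule (nonZeroDivisors R) f] :
    Surjective (map (A := K) f hf) := by
  rintro ⟨v⟩
  obtain ⟨⟨m, s⟩, hsv⟩ := IsLocalizedModule.surj (nonZeroDivisors R) f v
  have hm : m ≠ 0 := by
    rintro rfl
    exact smul_ne_zero_of_mem_nonZeroDivisors K s.2 v.2 (hsv.trans (map_zero f))
  refine ⟨Quot.mk _ ⟨m, hm⟩, Quot.sound ⟨v, algebraMap R K s, 1, ?_, (one_smul K _).symm⟩⟩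
  show f m = _
  rw [algebraMap_smul, ← hsv, Submonoid.smul_def]

end FractionField

end ProjSp

theorem LocalizedModule.mkLinearMap_injective {R M : Type*} [CommRing R] [IsDomain R]
    [AddCommGroup M] [Module R M] [NoZeroSMulDivisors R M] :
    Injective (mkLinearMap (nonZeroDivisors R) M) :=
  (IsLocalizedModule.injective_iff_isRegular (nonZeroDivisors R) _).2 fun c ↦
    smul_right_injective M (nonZeroDivisors.coe_ne_zero c)

theorem stmt_6 {R M : Type*} [CommRing R] [IsDomain R] [AddCommGroup M] [Module R M]
    [NoZeroSMulDivisors R M] :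
    ∃ F : ProjSp R M → ProjSp (Localization (nonZeroDivisors R))
        (LocalizedModule (nonZeroDivisors R) M),
      Function.Bijective F ∧
      ∀ (m : M) (hm : m ≠ 0)
        (hm' : LocalizedModule.mkLinearMap (nonZeroDivisors R) M m ≠ 0),
        F (Quot.mk _ ⟨m, hm⟩) =
          Quot.mk _ ⟨LocalizedModule.mkLinearMap (nonZeroDivisors R) M m, hm'⟩ := by
  let f := LocalizedModule.mkLinearMap (nonZeroDivisors R) M
  have hf : Injective f := LocalizedModule.mkLinearMap_injective
  exact ⟨ProjSp.map f hf, ⟨ProjSp.map_injective f hf, ProjSp.map_surjective f hf⟩,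
    fun _ _ _ ↦ rfl⟩
end

section
/- Let (M, d) be a module equipped with an integer-valued metric d, and let ℙ*(M) be the set of equivalence classes of M (including the class of 0). Define δ([x],[y]) = inf { d(x', y') : x' ∈ [x], y' ∈ [y] } and Δ([x],[y]) = inf over all finite chains [x] = [x₀], [x₁], …, [xₙ] = [y] of the sum δ([x₀],[x₁]) + ⋯ + δ([x_{n−1}],[xₙ]). Then Δ is a metric on ℙ*(M): it is nonnegative, symmetric, satisfies the triangle inequality, and Δ([x],[y]) = 0 iff [x] = [y]. -/
/-! The chain construction turns any nonnegative, symmetric, separating function `δ` into a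
metric `Δ`: reversing a chain gives symmetry, concatenating chains gives the triangle
inequality, and a chain of total length `0` consists of steps with `δ = 0`, hence is constant.
The representative distance `δ` inherits nonnegativity, symmetry and separation from `d`. -/

/-- The relation on all of `M` whose generated equivalence has the class of `0`
as a singleton and otherwise agrees with the common-divisor relation: this
presents `ℙ*(M) = {*} ⊔ ℙ(M)`. -/
def relStar (R : Type*) {M : Type*} [CommRing R] [AddCommGroup M] [Module R M]
    (x y : M) : Prop :=
  (x = 0 ∧ y = 0) ∨
    (x ≠ 0 ∧ y ≠ 0 ∧ ∃ (m : M) (r s : R), x = r • m ∧ y = s • m)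

/-- `ℙ*(M)`, the projective space of `M` together with the class `*` of `0`. -/
def ProjStar (R M : Type*) [CommRing R] [AddCommGroup M] [Module R M] :=
  Quot (relStar R (M := M))

section RepDists

variable {M α β : Type*}

def repDists (π : M → α) (d : M → M → β) (P Q : α) : Set β :=
  {t | ∃ x y : M, π x = P ∧ π y = Q ∧ d x y = t}

variable {π : M → α} {d : M → M → β} {δ : α → α → β}

theorem nonneg_of_isLeast_repDists [LE β] [Zero β] (hd : ∀ x y, 0 ≤ d x y)
    (hδ : ∀ P Q, IsLeast (repDists π d P Q) (δ P Q)) (P Q : α) : 0 ≤ δ P Q := by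
  obtain ⟨x, y, -, -, hxy⟩ := (hδ P Q).1
  exact hxy ▸ hd x y

theorem symm_of_isLeast_repDists [PartialOrder β] (hd : ∀ x y, d x y = d y x)
    (hδ : ∀ P Q, IsLeast (repDists π d P Q) (δ P Q)) (P Q : α) : δ P Q = δ Q P := by
  have key : ∀ P Q, δ P Q ≤ δ Q P := fun P Q => by
    obtain ⟨x, y, hx, hy, hxy⟩ := (hδ Q P).1
    exact (hδ P Q).2 ⟨y, x, hy, hx, (hd y x).trans hxy⟩
  exact (key P Q).antisymm (key Q P)

theorem eq_of_isLeast_repDists_eq_zero [LE β] [Zero β] (hd : ∀ x y, d x y = 0 → x = y)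
    (hδ : ∀ P Q, IsLeast (repDists π d P Q) (δ P Q)) {P Q : α} (h : δ P Q = 0) : P = Q := by
  obtain ⟨x, y, rfl, rfl, hxy⟩ := (hδ P Q).1
  rw [hd x y (hxy.trans h)]

end RepDists

section ChainSums

variable {α β : Type*} [AddCommMonoid β]

def chainSums (δ : α → α → β) (P Q : α) : Set β :=
  {t | ∃ (n : ℕ) (c : Fin (n + 1) → α), c 0 = P ∧ c (Fin.last n) = Q ∧
    t = ∑ i : Fin n, δ (c i.castSucc) (c i.succ)}

variable {δ : α → α → β}

theorem zero_mem_chainSums (P : α) : 0 ∈ chainSums δ P P :=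
  ⟨0, fun _ => P, rfl, rfl, by simp⟩

theorem add_mem_chainSums_cons {A S : α} {t : β} (P : α) (ht : t ∈ chainSums δ A S) :
    δ P A + t ∈ chainSums δ P S := by
  obtain ⟨n, c, rfl, rfl, rfl⟩ := ht
  refine ⟨n + 1, Fin.cons P c, rfl, by rw [← Fin.succ_last, Fin.cons_succ], ?_⟩
  simp only [Fin.sum_univ_succ, Fin.castSucc_zero, Fin.cons_zero, ← Fin.succ_castSucc,
    Fin.cons_succ]

theorem add_mem_chainSums {P Q S : α} {s t : β} (hs : s ∈ chainSums δ P Q)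
    (ht : t ∈ chainSums δ Q S) : s + t ∈ chainSums δ P S := by
  obtain ⟨n, c, rfl, rfl, rfl⟩ := hs
  induction n with
  | zero => simpa using ht
  | succ n ih =>
    have h := add_mem_chainSums_cons (c 0) (ih (fun i => c i.succ) ht)
    simpa only [Fin.sum_univ_succ, add_assoc, Fin.castSucc_zero, Fin.succ_castSucc] using h

theorem mem_chainSums_symm (hδ : ∀ P Q, δ P Q = δ Q P) {P Q : α} {t : β}
    (ht : t ∈ chainSums δ P Q) : t ∈ chainSums δ Q P := by
  obtain ⟨n, c, rfl, rfl, rfl⟩ := ht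
  refine ⟨n, fun i => c i.rev, by simp, by simp, ?_⟩
  refine Fintype.sum_equiv Fin.revPerm _ _ fun i => ?_
  simp only [Fin.revPerm_apply, Fin.rev_castSucc, Fin.rev_succ, Fin.rev_rev]
  exact hδ _ _

theorem chainSums_comm (hδ : ∀ P Q, δ P Q = δ Q P) (P Q : α) :
    chainSums δ P Q = chainSums δ Q P :=
  Set.ext fun _ => ⟨mem_chainSums_symm hδ, mem_chainSums_symm hδ⟩

variable [PartialOrder β] [IsOrderedAddMonoid β]

theorem nonneg_of_mem_chainSums (hδ : ∀ P Q, 0 ≤ δ P Q) {P Q : α} {t : β}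
    (ht : t ∈ chainSums δ P Q) : 0 ≤ t := by
  obtain ⟨n, c, -, -, rfl⟩ := ht
  exact Finset.sum_nonneg fun i _ => hδ _ _

theorem eq_of_zero_mem_chainSums (hδ : ∀ P Q, 0 ≤ δ P Q) (hδ_eq : ∀ P Q, δ P Q = 0 → P = Q)
    {P Q : α} (h : 0 ∈ chainSums δ P Q) : P = Q := by
  obtain ⟨n, c, rfl, rfl, hsum⟩ := h
  have hstep : ∀ i : Fin n, δ (c i.castSucc) (c i.succ) = 0 := fun i =>
    (Finset.sum_eq_zero_iff_of_nonneg fun i _ => hδ _ _).1 hsum.symm i (Finset.mem_univ i)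
  have hconst : ∀ i : Fin (n + 1), c 0 = c i := by
    intro i
    induction i using Fin.induction with
    | zero => rfl
    | succ j ih => rw [ih, hδ_eq _ _ (hstep j)]
  exact hconst _

end ChainSums

theorem stmt_10_general {R M : Type*} [CommRing R] [AddCommGroup M] [Module R M]
    (d : M → M → ℤ)
    (hd_nonneg : ∀ x y, 0 ≤ d x y)
    (hd_eq : ∀ x y, d x y = 0 ↔ x = y)
    (hd_symm : ∀ x y, d x y = d y x)
    (δ Δ : ProjStar R M → ProjStar R M → ℤ)
    (hδ : ∀ P Q : ProjStar R M,
      IsLeast {t : ℤ | ∃ x y : M, Quot.mk _ x = P ∧ Quot.mk _ y = Q ∧ d x y = t}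
        (δ P Q))
    (hΔ : ∀ P Q : ProjStar R M,
      IsLeast {t : ℤ | ∃ (n : ℕ) (c : Fin (n + 1) → ProjStar R M),
          c 0 = P ∧ c (Fin.last n) = Q ∧
          t = ∑ i : Fin n, δ (c i.castSucc) (c i.succ)}
        (Δ P Q)) :
    (∀ P Q, 0 ≤ Δ P Q) ∧
    (∀ P Q, Δ P Q = Δ Q P) ∧
    (∀ P Q S, Δ P S ≤ Δ P Q + Δ Q S) ∧
    (∀ P Q, Δ P Q = 0 ↔ P = Q) := by
  replace hδ : ∀ P Q, IsLeast (repDists (Quot.mk _) d P Q) (δ P Q) := hδ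
  replace hΔ : ∀ P Q, IsLeast (chainSums δ P Q) (Δ P Q) := hΔ
  have hδ_nonneg := nonneg_of_isLeast_repDists hd_nonneg hδ
  have hδ_symm := symm_of_isLeast_repDists hd_symm hδ
  have hδ_eq : ∀ P Q, δ P Q = 0 → P = Q := fun P Q =>
    eq_of_isLeast_repDists_eq_zero (fun x y => (hd_eq x y).1) hδ
  have hΔ_nonneg : ∀ P Q, 0 ≤ Δ P Q := fun P Q =>
    nonneg_of_mem_chainSums hδ_nonneg (hΔ P Q).1
  refine ⟨hΔ_nonneg, fun P Q => ?_, fun P Q S => ?_, fun P Q => ⟨fun h => ?_, ?_⟩⟩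
  · exact (hΔ P Q).unique (chainSums_comm hδ_symm P Q ▸ hΔ Q P)
  · exact (hΔ P S).2 (add_mem_chainSums (hΔ P Q).1 (hΔ Q S).1)
  · exact eq_of_zero_mem_chainSums hδ_nonneg hδ_eq (h ▸ (hΔ P Q).1)
  · rintro rfl
    exact ((hΔ P P).2 (zero_mem_chainSums P)).antisymm (hΔ_nonneg P P)

theorem stmt_10 {R M : Type*} [CommRing R] [IsDomain R] [AddCommGroup M] [Module R M]
    (d : M → M → ℤ)
    (hd_nonneg : ∀ x y, 0 ≤ d x y)
    (hd_eq : ∀ x y, d x y = 0 ↔ x = y)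
    (hd_symm : ∀ x y, d x y = d y x)
    (hd_tri : ∀ x y z, d x z ≤ d x y + d y z)
    (δ Δ : ProjStar R M → ProjStar R M → ℤ)
    (hδ : ∀ P Q : ProjStar R M,
      IsLeast {t : ℤ | ∃ x y : M, Quot.mk _ x = P ∧ Quot.mk _ y = Q ∧ d x y = t}
        (δ P Q))
    (hΔ : ∀ P Q : ProjStar R M,
      IsLeast {t : ℤ | ∃ (n : ℕ) (c : Fin (n + 1) → ProjStar R M),
          c 0 = P ∧ c (Fin.last n) = Q ∧
          t = ∑ i : Fin n, δ (c i.castSucc) (c i.succ)}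
        (Δ P Q)) :
    (∀ P Q, 0 ≤ Δ P Q) ∧
    (∀ P Q, Δ P Q = Δ Q P) ∧
    (∀ P Q S, Δ P S ≤ Δ P Q + Δ Q S) ∧
    (∀ P Q, Δ P Q = 0 ↔ P = Q) :=
  stmt_10_general d hd_nonneg hd_eq hd_symm δ Δ hδ hΔ
end
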